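/- Let S be the Cox ring of P^{n_1} × ... × P^{n_s} and let I ⊆ S be a strongly multistable ideal. Then I^{multilex} := ⊕_{(a_1,...,a_s) ∈ ℕ^s} (I_{(a_1,...,a_s)})^{multilex} is an ideal of S. -/

import Mathlib

open MvPolynomial

namespace Gotzmann

/-- Variable index set for the Cox ring of `P^{n 0} × ... × P^{n (s-1)}`:
the variable `x_{i,j}` is `⟨i, j⟩`. -/
abbrev PPVar (s : ℕ) (n : Fin s → ℕ) : Type := Σ i : Fin s, Fin (n i + 1)

/-- The multidegree of the variable `x_{i,j}` is the standard basis vector `e_i ∈ ℤ^s` (here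
realised in `ℕ^s`). -/
def ppw (s : ℕ) (n : Fin s → ℕ) : PPVar s n → (Fin s → ℕ) :=
  fun v => Pi.single v.1 1

/-- Weighted degree of an exponent vector. -/
def wdeg {σ M : Type*} [AddCommMonoid M] (w : σ → M) (u : σ →₀ ℕ) : M :=
  u.sum fun v e => e • w v

/-- Multigraded Hilbert function of `S/I` in degree `b`: the dimension of the image of the
degree-`b` part of `S` in `S/I`. -/
noncomputable def hilb (k : Type*) [Field k] {σ M : Type*} [AddCommMonoid M]
    (w : σ → M) (I : Ideal (MvPolynomial σ k)) (b : M) : ℕ :=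
  Module.finrank k ((weightedHomogeneousSubmodule k w b).map
    (Ideal.Quotient.mkₐ k I).toLinearMap)

/-- An ideal homogeneous with respect to the grading by `w`. -/
def IsHomog {k : Type*} [Field k] {σ M : Type*} [AddCommMonoid M]
    (w : σ → M) (I : Ideal (MvPolynomial σ k)) : Prop :=
  ∃ G : Set (MvPolynomial σ k),
    (∀ f ∈ G, ∃ d : M, f.IsWeightedHomogeneous w d) ∧ I = Ideal.span G

/-- A monomial ideal. -/
def IsMonomialIdeal {k : Type*} [Field k] {σ : Type*} (I : Ideal (MvPolynomial σ k)) : Prop :=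
  ∃ A : Set (σ →₀ ℕ), I = Ideal.span ((fun u => (monomial u (1 : k))) '' A)

/-- Generated in degrees componentwise at most `a`. -/
def GenInDegLE {k : Type*} [Field k] {σ : Type*} {s : ℕ}
    (w : σ → (Fin s → ℕ)) (I : Ideal (MvPolynomial σ k)) (a : Fin s → ℕ) : Prop :=
  ∃ G : Set (MvPolynomial σ k), I = Ideal.span G ∧
    ∀ f ∈ G, ∃ d : Fin s → ℕ, f.IsWeightedHomogeneous w d ∧ ∀ i, d i ≤ a i

/-- Generated in degrees at most `a` for the standard grading. -/
def GenInDegLE1 {k : Type*} [Field k] {σ : Type*}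
    (I : Ideal (MvPolynomial σ k)) (a : ℕ) : Prop :=
  ∃ G : Set (MvPolynomial σ k), I = Ideal.span G ∧
    ∀ f ∈ G, ∃ d : ℕ, f.IsWeightedHomogeneous (fun _ : σ => (1 : ℕ)) d ∧ d ≤ a

/-- `P` is the (multigraded) Hilbert polynomial of `I`: it agrees with the Hilbert function
for all multidegrees sufficiently deep in `ℕ^s`. -/
def IsHilbPoly (k : Type*) [Field k] {σ : Type*} {s : ℕ}
    (w : σ → (Fin s → ℕ)) (I : Ideal (MvPolynomial σ k))
    (P : MvPolynomial (Fin s) ℚ) : Prop :=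
  ∃ N : ℕ, ∀ b : Fin s → ℕ, (∀ i, N ≤ b i) →
    eval (fun i => (b i : ℚ)) P = (hilb k w I b : ℚ)

/-- `P` is the Hilbert polynomial of the standard-graded ideal `I`. -/
def IsHilbPoly1 (k : Type*) [Field k] {σ : Type*}
    (I : Ideal (MvPolynomial σ k)) (P : Polynomial ℚ) : Prop :=
  ∃ N : ℕ, ∀ b : ℕ, N ≤ b →
    P.eval (b : ℚ) = (hilb k (fun _ : σ => (1 : ℕ)) I b : ℚ)

/-- Hilbert polynomial for a `ℤ^s`-graded ring, agreement deep in `ℕ^s ⊆ ℤ^s`. -/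
def IsHilbPolyZ (k : Type*) [Field k] {σ : Type*} {s : ℕ}
    (w : σ → (Fin s → ℤ)) (I : Ideal (MvPolynomial σ k))
    (P : MvPolynomial (Fin s) ℚ) : Prop :=
  ∃ N : ℕ, ∀ b : Fin s → ℕ, (∀ i, N ≤ b i) →
    eval (fun i => (b i : ℚ)) P = (hilb k w I (fun i => (b i : ℤ)) : ℚ)

/-- A strongly multistable (monomial) ideal. -/
def StronglyMultistable {k : Type*} [Field k] {s : ℕ} {n : Fin s → ℕ}
    (I : Ideal (MvPolynomial (PPVar s n) k)) : Prop :=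
  IsMonomialIdeal I ∧
    ∀ u : PPVar s n →₀ ℕ, (monomial u (1 : k)) ∈ I →
      ∀ (i : Fin s) (j j' : Fin (n i + 1)), j' < j → u ⟨i, j⟩ ≠ 0 →
        (monomial (u - Finsupp.single ⟨i, j⟩ 1 + Finsupp.single ⟨i, j'⟩ 1) (1 : k)) ∈ I

/-- A strongly multistable set of exponent vectors. -/
def StronglyMultistableSet {s : ℕ} {n : Fin s → ℕ} (M : Set (PPVar s n →₀ ℕ)) : Prop :=
  ∀ u ∈ M, ∀ (i : Fin s) (j j' : Fin (n i + 1)), j' < j → u ⟨i, j⟩ ≠ 0 →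
    u - Finsupp.single ⟨i, j⟩ 1 + Finsupp.single ⟨i, j'⟩ 1 ∈ M

/-- The part of an exponent vector supported on block `i`. -/
noncomputable def blockPart {s : ℕ} {n : Fin s → ℕ} (i : Fin s) (u : PPVar s n →₀ ℕ) :
    PPVar s n →₀ ℕ := u.filter fun v => v.1 = i

/-- The part of an exponent vector supported off block `i`. -/
noncomputable def offBlock {s : ℕ} {n : Fin s → ℕ} (i : Fin s) (u : PPVar s n →₀ ℕ) :
    PPVar s n →₀ ℕ := u.filter fun v => v.1 ≠ i

/-- Exponent vectors supported on block `i` of total degree `d`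
(monomials of degree `d·e_i`). -/
def blockMon {s : ℕ} {n : Fin s → ℕ} (i : Fin s) (d : ℕ) : Set (PPVar s n →₀ ℕ) :=
  {p | (∀ v ∈ p.support, v.1 = i) ∧ p.sum (fun _ e => e) = d}

/-- `blockLt i u v` : the block-`i` monomial of `v` is strictly larger than that of `u` in the
lexicographic order with `x_{i,0} ≻ x_{i,1} ≻ ⋯`. -/
def blockLt {s : ℕ} {n : Fin s → ℕ} (i : Fin s) (u v : PPVar s n →₀ ℕ) : Prop :=
  Pi.Lex (· < ·) (fun {_} => (· < ·)) (fun j => u ⟨i, j⟩) (fun j => v ⟨i, j⟩)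

/-- `M` is an `x_i`-lex set: replacing the block-`i` part of a member by any lexicographically
larger monomial of the same degree stays in `M`. -/
def IsXiLex {s : ℕ} {n : Fin s → ℕ} (i : Fin s) (M : Set (PPVar s n →₀ ℕ)) : Prop :=
  ∀ u ∈ M, ∀ p' : PPVar s n →₀ ℕ,
    (∀ v ∈ p'.support, v.1 = i) →
    p'.sum (fun _ e => e) = (blockPart i u).sum (fun _ e => e) →
    blockLt i (blockPart i u) p' →
    offBlock i u + p' ∈ M

/-- The initial lexsegment of size `c` among block-`i` monomials of degree `d`. -/
noncomputable def lexSeg {s : ℕ} {n : Fin s → ℕ} (i : Fin s) (d c : ℕ) :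
    Set (PPVar s n →₀ ℕ) :=
  {p ∈ blockMon i d | (blockMon (n := n) i d ∩ {p' | blockLt i p p'}).ncard < c}

/-- The operation `M ↦ M^{x_i lex}`: in each fibre over a fixed off-block-`i` part, replace the
set of block-`i` parts by the initial lexsegment of the same cardinality. -/
noncomputable def xiLexify {s : ℕ} {n : Fin s → ℕ} (i : Fin s)
    (M : Set (PPVar s n →₀ ℕ)) : Set (PPVar s n →₀ ℕ) :=
  {w | ∃ u ∈ M, offBlock i w = offBlock i u ∧
        blockPart i w ∈ lexSeg i ((blockPart i u).sum fun _ e => e)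
          ({p | p ∈ blockMon i ((blockPart i u).sum fun _ e => e) ∧
              offBlock i u + p ∈ M}).ncard}

/-- Successively apply `M ↦ M^{x_i lex}` for the first `t` blocks. -/
noncomputable def lexifyUpTo {s : ℕ} {n : Fin s → ℕ} (M : Set (PPVar s n →₀ ℕ)) :
    ℕ → Set (PPVar s n →₀ ℕ)
  | 0 => M
  | t + 1 => if h : t < s then xiLexify ⟨t, h⟩ (lexifyUpTo M t) else lexifyUpTo M t

/-- `M^{multilex} = M^{x_1 lex ⋯ x_s lex}`. -/
noncomputable def multilexify {s : ℕ} {n : Fin s → ℕ} (M : Set (PPVar s n →₀ ℕ)) :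
    Set (PPVar s n →₀ ℕ) := lexifyUpTo M s

/-- The exponent vectors of the monomials of `I` of multidegree `a`. -/
def monomialsOf {k : Type*} [Field k] {s : ℕ} {n : Fin s → ℕ}
    (I : Ideal (MvPolynomial (PPVar s n) k)) (a : Fin s → ℕ) : Set (PPVar s n →₀ ℕ) :=
  {u | wdeg (ppw s n) u = a ∧ (monomial u (1 : k)) ∈ I}

/-- A multilex (monomial) ideal. -/
def IsMultilexIdeal {k : Type*} [Field k] {s : ℕ} {n : Fin s → ℕ}
    (I : Ideal (MvPolynomial (PPVar s n) k)) : Prop :=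
  IsMonomialIdeal I ∧ ∀ (a : Fin s → ℕ) (i : Fin s), IsXiLex i (monomialsOf I a)

/-- `κ` encodes the `d`-th Macaulay representation of `α`:
`α = C(κ(d),d) + ⋯ + C(κ(1),1)` with `κ(d) > ⋯ > κ(1) ≥ 0`; here `κ j` is the paper's
`κ(j+1)`. -/
def IsMacaulayRep (d α : ℕ) (κ : Fin d → ℕ) : Prop :=
  StrictMono κ ∧ α = ∑ j : Fin d, Nat.choose (κ j) ((j : ℕ) + 1)

/-- The Macaulay bound `α^{⟨d⟩}`. -/
noncomputable def macaulayBound (d α : ℕ) : ℕ :=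
  letI := Classical.propDecidable (∃ κ : Fin d → ℕ, IsMacaulayRep d α κ)
  if h : ∃ κ : Fin d → ℕ, IsMacaulayRep d α κ
  then ∑ j : Fin d, Nat.choose (h.choose j + 1) ((j : ℕ) + 2)
  else 0

/-- Maximal growth of a Hilbert function in one direction: with
`H u = C(nv+u, nv)·q(u) + r(u)` the Euclidean division, `H (u+1) = C(nv+u+1,nv)·q(u) + r(u)^⟨u⟩`. -/
def growthStep (nv : ℕ) (H : ℕ → ℕ) (u : ℕ) : Prop :=
  H (u + 1) =
    (nv + u + 1).choose nv * (H u / (nv + u).choose nv)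
      + macaulayBound u (H u % (nv + u).choose nv)

/-- Hilbert polynomial for a `ℤ^s`-graded Cox ring, with agreement sufficiently far into the nef
cone, parameterised by nef classes `c i`. -/
def IsHilbPolyNef (k : Type*) [Field k] {σ : Type*} {s : ℕ}
    (w : σ → (Fin s → ℤ)) (c : Fin s → (Fin s → ℤ))
    (I : Ideal (MvPolynomial σ k)) (P : MvPolynomial (Fin s) ℚ) : Prop :=
  ∃ N : ℕ, ∀ b : Fin s → ℕ, (∀ i, N ≤ b i) →
    eval (fun j => ((∑ i, (b i : ℤ) * c i j : ℤ) : ℚ)) P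
      = (hilb k w I (fun j => ∑ i, (b i : ℤ) * c i j) : ℚ)

/-- The `ℤ²`-grading of the Cox ring of Kleinschmidt's Picard-rank-2 toric variety `X_d(a)`:
`deg z_i = (-a_i, 1)` for `1 ≤ i ≤ s`, `deg z_{s+1} = (0,1)`, `deg z_i = (1,0)` otherwise
(indices here are `0`-based). -/
def kw (d s : ℕ) (a : Fin s → ℕ) : Fin (d + 2) → (Fin 2 → ℤ) :=
  fun i => if h : (i : ℕ) < s then ![-(a ⟨i, h⟩ : ℤ), 1]
    else if (i : ℕ) = s then ![0, 1] else ![1, 0]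

/-!
Multiplication by a variable `x_v` maps the monomials of `I` of degree `a` into those of degree
`a + e_v`, and every graded piece is strongly multistable; it suffices to show that each
operation `M ↦ M^{x_i lex}` preserves these two properties of the family of graded pieces. Moving
or multiplying in the part of a monomial off block `i` only enlarges the fibres `M_j`, and
lexsegments grow with their size. Multiplying by a variable of block `i` is Macaulay's theorem for
strongly stable sets: if `x_i A ⊆ B` then `x_i L_{#A} ⊆ L_{#B}` for the lexsegments `L`. It rests
on the Eliahou–Kervaire count `#(shadow A) = ∑_j #(A ∩ k[x_0, …, x_j])` and on the lexsegment
having the fewest members in each `k[x_0, …, x_j]` among strongly stable sets of its size.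
-/

open Finset

section TopSegment

variable {β α : Type*} [LinearOrder α] (f : β → α) (s : Finset β)

def numAbove (x : β) : ℕ := #(s.filter fun y => f x < f y)

def topSeg (c : ℕ) : Finset β := s.filter fun x => numAbove f s x < c

variable {f s}

theorem mem_topSeg {c : ℕ} {x : β} : x ∈ topSeg f s c ↔ x ∈ s ∧ numAbove f s x < c :=
  mem_filter

theorem topSeg_subset (c : ℕ) : topSeg f s c ⊆ s :=
  filter_subset _ _

theorem topSeg_mono {c c' : ℕ} (h : c ≤ c') : topSeg f s c ⊆ topSeg f s c' :=
  monotone_filter_right _ fun _ _ hx => hx.trans_le h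

theorem topSeg_zero : topSeg f s 0 = ∅ :=
  filter_false_of_mem fun _ _ => Nat.not_lt_zero _

theorem numAbove_le_of_lt {x y : β} (hxy : f x < f y) : numAbove f s y ≤ numAbove f s x :=
  card_le_card (monotone_filter_right _ fun _ _ hz => hxy.trans hz)

theorem numAbove_lt_of_lt {x y : β} (hy : y ∈ s) (hxy : f x < f y) :
    numAbove f s y < numAbove f s x := by
  refine card_lt_card ⟨monotone_filter_right _ fun _ _ hz => hxy.trans hz, fun h => ?_⟩
  exact lt_irrefl (f y) (mem_filter.1 (h (mem_filter.2 ⟨hy, hxy⟩))).2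

theorem numAbove_lt_card {x : β} (hx : x ∈ s) : numAbove f s x < #s :=
  card_lt_card (filter_ssubset.2 ⟨x, hx, lt_irrefl _⟩)

theorem mem_topSeg_of_lt {c : ℕ} {x y : β} (hx : x ∈ topSeg f s c) (hy : y ∈ s)
    (hxy : f x < f y) : y ∈ topSeg f s c :=
  mem_topSeg.2 ⟨hy, (numAbove_le_of_lt hxy).trans_lt (mem_topSeg.1 hx).2⟩

theorem numAbove_injOn (hf : Set.InjOn f s) : Set.InjOn (numAbove f s) s := by
  intro x hx y hy hxy
  by_contra hne
  rcases lt_or_gt_of_ne (hf.ne hx hy hne) with h | h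
  · exact (numAbove_lt_of_lt hy h).ne hxy.symm
  · exact (numAbove_lt_of_lt hx h).ne hxy

theorem image_numAbove (hf : Set.InjOn f s) : s.image (numAbove f s) = range #s := by
  refine eq_of_subset_of_card_le ?_ ?_
  · exact image_subset_iff.2 fun x hx => mem_range.2 (numAbove_lt_card hx)
  · rw [card_range, card_image_of_injOn (numAbove_injOn hf)]

theorem card_topSeg (hf : Set.InjOn f s) (c : ℕ) : #(topSeg f s c) = min c #s := by
  have himage : (topSeg f s c).image (numAbove f s) = range (min c #s) := by
    have hrange : (range #s).filter (· < c) = range (min c #s) := by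
      ext x
      simp [and_comm]
    rw [← hrange, ← image_numAbove hf, filter_image]
    rfl
  rw [← card_image_of_injOn ((numAbove_injOn hf).mono (topSeg_subset c)), himage, card_range]

theorem eq_topSeg_of_upward {X : Finset β} (hf : Set.InjOn f s) (hX : X ⊆ s)
    (hup : ∀ x ∈ X, ∀ y ∈ s, f x < f y → y ∈ X) : X = topSeg f s #X := by
  refine eq_of_subset_of_card_le (fun x hx => mem_topSeg.2 ⟨hX hx, ?_⟩) ?_
  · refine card_lt_card ⟨fun y hy => ?_, fun h => ?_⟩
    · rw [mem_filter] at hy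
      exact hup x hx y hy.1 hy.2
    · exact lt_irrefl _ (mem_filter.1 (h hx)).2
  · rw [card_topSeg hf]
    exact min_le_left _ _

end TopSegment

section Monomials

variable {m : ℕ}

def SupportedBelow (k : ℕ) (u : Fin m → ℕ) : Prop := ∀ j, u j ≠ 0 → (j : ℕ) < k

instance (k : ℕ) : DecidablePred (SupportedBelow (m := m) k) :=
  fun _ => Fintype.decidableForallFintype

/-- The monomials of degree `d` in `x_0, …, x_{k-1}`, monomials being exponent vectors. -/
def monomials (k d : ℕ) : Finset (Fin m → ℕ) :=
  (Nat.antidiagonalTuple m d).filter (SupportedBelow k)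

/-- `toLex` orders monomials lexicographically with `x_0 > x_1 > ⋯`. -/
noncomputable def lexInit (m k d c : ℕ) : Finset (Fin m → ℕ) := topSeg toLex (monomials k d) c

variable {k d c : ℕ} {u : Fin m → ℕ} {j j' : Fin m}

theorem mem_monomials : u ∈ monomials k d ↔ ∑ i, u i = d ∧ SupportedBelow k u := by
  rw [monomials, mem_filter, Nat.mem_antidiagonalTuple]

theorem monomials_mono {k' : ℕ} (h : k ≤ k') : monomials (m := m) k d ⊆ monomials k' d :=
  monotone_filter_right _ fun _ _ hu j hj => (hu j hj).trans_le h

theorem supportedBelow_of_le (hm : m ≤ k) (u : Fin m → ℕ) : SupportedBelow k u :=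
  fun j _ => j.2.trans_le hm

theorem eq_zero_of_mem_monomials_zero (hu : u ∈ monomials k 0) : u = 0 := by
  funext i
  exact (sum_eq_zero_iff.1 (mem_monomials.1 hu).1) i (mem_univ i)

theorem monomials_zero_subsingleton : (monomials (m := m) k 0 : Set (Fin m → ℕ)).Subsingleton :=
  fun _ hu _ hv => (eq_zero_of_mem_monomials_zero hu).trans (eq_zero_of_mem_monomials_zero hv).symm

theorem monomials_zero_succ : monomials (m := m) 0 (d + 1) = ∅ := by
  refine eq_empty_of_forall_notMem fun u hu => ?_
  have hzero : u = 0 :=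
    funext fun j => by_contra fun h => Nat.not_lt_zero _ ((mem_monomials.1 hu).2 j h)
  simpa [hzero] using (mem_monomials.1 hu).1

theorem sum_add_single (u : Fin m → ℕ) (j : Fin m) :
    ∑ i, (u + Pi.single j 1 : Fin m → ℕ) i = ∑ i, u i + 1 := by
  simp [sum_add_distrib]

theorem sub_single_add_single (h : u j ≠ 0) : u - Pi.single j 1 + Pi.single j 1 = u := by
  funext i
  rcases eq_or_ne i j with rfl | hij
  · simp only [Pi.add_apply, Pi.sub_apply, Pi.single_eq_same]
    omega
  · simp [hij]

theorem supportedBelow_add_single (hu : SupportedBelow k u) (hj : (j : ℕ) < k) :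
    SupportedBelow k (u + Pi.single j 1) := by
  intro i hi
  rcases eq_or_ne i j with rfl | hij
  · exact hj
  · exact hu i (by simpa [hij] using hi)

theorem supportedBelow_sub (hu : SupportedBelow k u) (v : Fin m → ℕ) :
    SupportedBelow k (u - v) :=
  fun i hi => hu i fun h => hi (by simp [h])

theorem add_single_mem_monomials (hu : u ∈ monomials k d) (hj : (j : ℕ) < k) :
    u + Pi.single j 1 ∈ monomials k (d + 1) := by
  rw [mem_monomials] at hu ⊢
  exact ⟨by rw [sum_add_single, hu.1], supportedBelow_add_single hu.2 hj⟩

theorem sub_single_mem_monomials (hu : u ∈ monomials k (d + 1)) (hj : u j ≠ 0) :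
    u - Pi.single j 1 ∈ monomials k d := by
  rw [mem_monomials] at hu ⊢
  refine ⟨?_, supportedBelow_sub hu.2 _⟩
  have h := sum_add_single (u - Pi.single j 1) j
  rw [sub_single_add_single hj, hu.1] at h
  omega

theorem move_mem_monomials (hu : u ∈ monomials k d) (hj : u j ≠ 0) (hj' : (j' : ℕ) < k) :
    u - Pi.single j 1 + Pi.single j' 1 ∈ monomials k d := by
  obtain ⟨hsum, hsupp⟩ := mem_monomials.1 hu
  have hd : d = d - 1 + 1 := by
    have : u j ≤ d := hsum ▸ single_le_sum (fun _ _ => Nat.zero_le _) (mem_univ j)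
    omega
  rw [hd] at hu ⊢
  exact add_single_mem_monomials (sub_single_mem_monomials hu hj) hj'

theorem toLex_lt_move (hjj : j' < j) :
    toLex u < toLex (u - Pi.single j 1 + Pi.single j' 1) := by
  refine ⟨j', fun i hi => ?_, ?_⟩
  · simp [hi.ne, (hi.trans hjj).ne]
  · simp [hjj.ne]

end Monomials

section LexSegments

variable {m k d c : ℕ} {u v w : Fin m → ℕ} {A B : Finset (Fin m → ℕ)}

theorem lexInit_subset_monomials : lexInit m k d c ⊆ monomials k d :=
  topSeg_subset c

theorem lexInit_mono {c' : ℕ} (h : c ≤ c') : lexInit m k d c ⊆ lexInit m k d c' :=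
  topSeg_mono h

theorem card_lexInit : #(lexInit m k d c) = min c #(monomials (m := m) k d) :=
  card_topSeg toLex.injective.injOn c

theorem card_lexInit_of_subset (hA : A ⊆ monomials k d) : #(lexInit m k d #A) = #A := by
  rw [card_lexInit, min_eq_left (card_le_card hA)]

theorem mem_lexInit_of_lt (hu : u ∈ lexInit m k d c) (hv : v ∈ monomials k d)
    (h : toLex u < toLex v) : v ∈ lexInit m k d c :=
  mem_topSeg_of_lt hu hv h

theorem eq_lexInit_of_upward (hA : A ⊆ monomials k d)
    (hup : ∀ u ∈ A, ∀ v ∈ monomials k d, toLex u < toLex v → v ∈ A) : A = lexInit m k d #A :=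
  eq_topSeg_of_upward toLex.injective.injOn hA hup

theorem lexInit_card_eq_self_of_subsingleton (hA : A ⊆ monomials k d)
    (hs : (monomials (m := m) k d : Set (Fin m → ℕ)).Subsingleton) : lexInit m k d #A = A := by
  refine (eq_lexInit_of_upward hA fun u hu v hv h => ?_).symm
  exact absurd (hs (hA hu) hv) (ne_of_apply_ne toLex h.ne)

def IsStronglyStable (A : Finset (Fin m → ℕ)) : Prop :=
  ∀ u ∈ A, ∀ j j' : Fin m, j' < j → u j ≠ 0 → u - Pi.single j 1 + Pi.single j' 1 ∈ A

theorem isStronglyStable_lexInit : IsStronglyStable (lexInit m k d c) := by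
  intro u hu j j' hjj hj
  have hjk : (j' : ℕ) < k := lt_trans hjj ((mem_monomials.1 (lexInit_subset_monomials hu)).2 j hj)
  exact mem_lexInit_of_lt hu (move_mem_monomials (lexInit_subset_monomials hu) hj hjk)
    (toLex_lt_move hjj)

theorem IsStronglyStable.filter_supportedBelow (hA : IsStronglyStable A) (k : ℕ) :
    IsStronglyStable (A.filter (SupportedBelow k)) := by
  intro u hu j j' hjj hj
  rw [mem_filter] at hu ⊢
  refine ⟨hA u hu.1 j j' hjj hj, supportedBelow_add_single (supportedBelow_sub hu.2 _) ?_⟩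
  exact lt_trans hjj (hu.2 j hj)

end LexSegments

section Shadow

variable {m k d : ℕ} {u w : Fin m → ℕ} {A B : Finset (Fin m → ℕ)}

theorem move_add_single_comm {j j' t : Fin m} (hj : u j ≠ 0) :
    u + Pi.single t 1 - Pi.single j 1 + Pi.single j' 1
      = u - Pi.single j 1 + Pi.single j' 1 + Pi.single t 1 := by
  funext i
  simp only [Pi.add_apply, Pi.sub_apply, Pi.single_apply]
  split_ifs <;> subst_vars <;> omega

theorem exists_supportedBelow_succ (hw : w ≠ 0) :
    ∃ t : Fin m, w t ≠ 0 ∧ SupportedBelow (t + 1) w := by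
  obtain ⟨i, hi⟩ := Function.ne_iff.1 hw
  have hne : (univ.filter fun i => w i ≠ 0).Nonempty := ⟨i, mem_filter.2 ⟨mem_univ i, hi⟩⟩
  obtain ⟨t, ht, hmax⟩ := exists_max_image _ id hne
  exact ⟨t, (mem_filter.1 ht).2,
    fun i hi => Nat.lt_succ_of_le (hmax i (mem_filter.2 ⟨mem_univ i, hi⟩))⟩

noncomputable def colon (A : Finset (Fin m → ℕ)) (t : Fin m) : Finset (Fin m → ℕ) :=
  A.preimage (· + Pi.single t 1) (add_left_injective _).injOn

theorem mem_colon {t : Fin m} : u ∈ colon A t ↔ u + Pi.single t 1 ∈ A :=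
  mem_preimage

theorem card_colon (t : Fin m) : #(colon A t) = #(A.filter fun u => u t ≠ 0) := by
  classical
  rw [← card_image_of_injective _ (add_left_injective (Pi.single t 1)), colon, image_preimage]
  congr 1
  refine filter_congr fun u _ => ⟨?_, fun hu => ⟨u - Pi.single t 1, sub_single_add_single hu⟩⟩
  rintro ⟨v, rfl⟩
  simp

theorem colon_subset_monomials {t : Fin m} (hA : A ⊆ monomials k (d + 1)) :
    colon A t ⊆ monomials k d := by
  intro u hu
  have h := sub_single_mem_monomials (hA (mem_colon.1 hu)) (j := t) (by simp)
  rwa [add_tsub_cancel_right] at h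

theorem IsStronglyStable.colon (hA : IsStronglyStable A) (t : Fin m) :
    IsStronglyStable (colon A t) := by
  intro u hu j j' hjj hj
  rw [mem_colon, ← move_add_single_comm hj]
  exact hA _ (mem_colon.1 hu) j j' hjj (by simp [hj])

def shadow (k : ℕ) (A : Finset (Fin m → ℕ)) : Finset (Fin m → ℕ) :=
  A.biUnion fun u => (univ.filter fun j : Fin m => (j : ℕ) < k).image (u + Pi.single · 1)

theorem mem_shadow :
    w ∈ shadow k A ↔ ∃ u ∈ A, ∃ j : Fin m, (j : ℕ) < k ∧ u + Pi.single j 1 = w := by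
  simp [shadow]

theorem add_single_mem_shadow (hu : u ∈ A) {j : Fin m} (hj : (j : ℕ) < k) :
    u + Pi.single j 1 ∈ shadow k A :=
  mem_shadow.2 ⟨u, hu, j, hj, rfl⟩

theorem shadow_colon_subset (hk : k < m) (hst : IsStronglyStable A) :
    shadow (k + 1) (colon A ⟨k, hk⟩) ⊆ A := by
  intro w hw
  obtain ⟨u, hu, j, hj, rfl⟩ := mem_shadow.1 hw
  rw [mem_colon] at hu
  rcases (Nat.lt_succ_iff.1 hj).lt_or_eq with hjk | hjk
  · have h := hst _ hu ⟨k, hk⟩ j hjk (by simp)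
    rwa [add_tsub_cancel_right] at h
  · rwa [show j = ⟨k, hk⟩ from Fin.ext hjk]

end Shadow

section EliahouKervaire

variable {m k d : ℕ} {u v : Fin m → ℕ} {A B : Finset (Fin m → ℕ)}

theorem SupportedBelow.apply_eq_zero (hu : SupportedBelow k u) {i : Fin m} (hi : k ≤ i) :
    u i = 0 :=
  by_contra fun h => (hi.trans_lt (hu i h)).false

theorem add_single_ne_add_single {j j' : Fin m} (hu : SupportedBelow (j + 1) u) (hjj : j < j') :
    u + Pi.single j 1 ≠ v + Pi.single j' 1 := by
  intro h
  have := congrFun h j'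
  simp [hjj.ne', hu.apply_eq_zero (Nat.succ_le_of_lt hjj)] at this

/-- `j` is the last variable of the monomial `x^u x_j`; stability supplies `u`. -/
theorem shadow_eq_biUnion (hA : A ⊆ monomials k d) (hst : IsStronglyStable A) :
    shadow k A = (univ.filter fun j : Fin m => (j : ℕ) < k).biUnion
      fun j => (A.filter (SupportedBelow (j + 1))).image (· + Pi.single j 1) := by
  ext w
  simp only [mem_biUnion, mem_image, mem_filter, mem_univ, true_and]
  constructor
  · intro hw
    obtain ⟨u, hu, j, hj, rfl⟩ := mem_shadow.1 hw
    obtain ⟨t, ht, hlast⟩ :=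
      exists_supportedBelow_succ (w := u + Pi.single j 1) (Function.ne_iff.2 ⟨j, by simp⟩)
    have hsupp : SupportedBelow (t + 1) u := fun i hi => hlast i (by simp [hi])
    rcases (Nat.lt_succ_iff.1 (hlast j (by simp))).lt_or_eq with hjt | hjt
    · have hut : u t ≠ 0 := by simpa [(Fin.lt_def.2 hjt).ne'] using ht
      refine ⟨t, (mem_monomials.1 (hA hu)).2 t hut, u - Pi.single t 1 + Pi.single j 1,
        ⟨hst u hu t j hjt hut, supportedBelow_add_single (supportedBelow_sub hsupp _) ?_⟩, ?_⟩
      · omega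
      · rw [add_right_comm, sub_single_add_single hut]
    · rw [← Fin.ext hjt] at hsupp
      exact ⟨j, hj, u, ⟨hu, hsupp⟩, rfl⟩
  · rintro ⟨j, hj, u, ⟨hu, -⟩, rfl⟩
    exact add_single_mem_shadow hu hj

/-- The Eliahou–Kervaire count of the shadow of a strongly stable set. -/
theorem card_shadow (hA : A ⊆ monomials k d) (hst : IsStronglyStable A) :
    #(shadow k A) = ∑ j ∈ univ.filter (fun j : Fin m => (j : ℕ) < k),
      #(A.filter (SupportedBelow (j + 1))) := by
  rw [shadow_eq_biUnion hA hst, card_biUnion]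
  · exact sum_congr rfl fun j _ => card_image_of_injective _ (add_left_injective _)
  · intro j₁ _ j₂ _ hne
    refine disjoint_left.2 fun w hw₁ hw₂ => ?_
    obtain ⟨u₁, hu₁, rfl⟩ := mem_image.1 hw₁
    obtain ⟨u₂, hu₂, he⟩ := mem_image.1 hw₂
    rcases lt_or_gt_of_ne hne with h | h
    · exact add_single_ne_add_single (mem_filter.1 hu₁).2 h he.symm
    · exact add_single_ne_add_single (mem_filter.1 hu₂).2 h he

theorem card_shadow_le_card_shadow (hA : A ⊆ monomials k d) (hAst : IsStronglyStable A)
    (hB : B ⊆ monomials k d) (hBst : IsStronglyStable B)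
    (h : ∀ j, #(A.filter (SupportedBelow j)) ≤ #(B.filter (SupportedBelow j))) :
    #(shadow k A) ≤ #(shadow k B) := by
  rw [card_shadow hA hAst, card_shadow hB hBst]
  exact sum_le_sum fun j _ => h _

end EliahouKervaire

section Macaulay

variable {m k d : ℕ} {p q u v : Fin m → ℕ}

theorem toLex_lt_toLex_iff : toLex u < toLex v ↔ ∃ i, (∀ j < i, u j = v j) ∧ u i < v i :=
  Iff.rfl

theorem not_supportedBelow_of_lex (hsum : ∑ i, u i = ∑ i, v i) {j₀ : Fin m}
    (heq : ∀ i < j₀, u i = v i) (hlt : u j₀ < v j₀) : ¬ SupportedBelow (j₀ + 1) u := by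
  intro hu
  have hfilter : ∑ i ∈ univ.filter (· ≤ j₀), u i = ∑ i, u i :=
    sum_filter_of_ne fun i _ hi => Nat.lt_succ_iff.1 (hu i hi)
  have hlt' : ∑ i ∈ univ.filter (· ≤ j₀), u i < ∑ i ∈ univ.filter (· ≤ j₀), v i := by
    refine sum_lt_sum (fun i hi => ?_) ⟨j₀, mem_filter.2 ⟨mem_univ _, le_rfl⟩, hlt⟩
    rcases (mem_filter.1 hi).2.lt_or_eq with h | rfl
    · exact (heq i h).le
    · exact hlt.le
  have hle : ∑ i ∈ univ.filter (· ≤ j₀), v i ≤ ∑ i, v i :=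
    sum_le_sum_of_subset (filter_subset _ _)
  omega

theorem toLex_le_sub_single (hp : ∑ i, p i = d) (hq : ∑ i, q i = d + 1) {t : Fin m}
    (ht : q t ≠ 0) (hlast : SupportedBelow (t + 1) q) {v : Fin m}
    (h : toLex (p + Pi.single v 1) < toLex q) : toLex p ≤ toLex (q - Pi.single t 1) := by
  by_contra hlt
  obtain ⟨j₀, heq, hj₀⟩ : ∃ j₀, (∀ i < j₀, (q - Pi.single t 1 : Fin m → ℕ) i = p i) ∧
      (q - Pi.single t 1 : Fin m → ℕ) j₀ < p j₀ := toLex_lt_toLex_iff.1 (not_le.1 hlt)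
  have hsum : ∑ i, (q - Pi.single t 1 : Fin m → ℕ) i = ∑ i, p i := by
    have := sum_add_single (q - Pi.single t 1) t
    rw [sub_single_add_single ht] at this
    omega
  have hj₀t : j₀ < t := by
    by_contra hle
    refine not_supportedBelow_of_lex hsum heq hj₀ (supportedBelow_sub (fun i hi => ?_) _)
    have := hlast i hi
    omega
  have hqp : ∀ i ≤ j₀, q i ≤ p i := by
    intro i hi
    have hqi : q i = (q - Pi.single t 1 : Fin m → ℕ) i := by simp [(hi.trans_lt hj₀t).ne]
    rcases hi.lt_or_eq with hi | rfl
    · exact (hqi.trans (heq i hi)).le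
    · exact hqi ▸ hj₀.le
  refine h.asymm ⟨min v j₀, fun i hi => ?_, ?_⟩
  · have hi' := lt_min_iff.1 hi
    have hqi : q i = p i := by simpa [(hi'.2.trans hj₀t).ne] using heq i hi'.2
    show q i = (p + Pi.single v 1 : Fin m → ℕ) i
    simp [hi'.1.ne, hqi]
  · show q (min v j₀) < (p + Pi.single v 1 : Fin m → ℕ) (min v j₀)
    rcases le_total v j₀ with hv | hv
    · rw [min_eq_left hv]
      simpa using Nat.lt_succ_of_le (hqp v hv)
    · rw [min_eq_right hv]
      have hqj₀ : q j₀ = (q - Pi.single t 1 : Fin m → ℕ) j₀ := by simp [hj₀t.ne]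
      rw [Pi.add_apply, hqj₀]
      exact hj₀.trans_le (Nat.le_add_right _ _)

/-- Every monomial above `x^p x_j` lies in the shadow of the segment, by `toLex_le_sub_single`. -/
theorem add_single_mem_lexInit {c c' : ℕ} (hp : p ∈ lexInit m k d c) {j : Fin m}
    (hj : (j : ℕ) < k) (h : #(shadow k (lexInit m k d c)) ≤ c') :
    p + Pi.single j 1 ∈ lexInit m k (d + 1) c' := by
  have hpM := lexInit_subset_monomials hp
  refine mem_topSeg.2 ⟨add_single_mem_monomials hpM hj,
    lt_of_lt_of_le (card_lt_card ⟨fun q hq => ?_, fun hsub => ?_⟩) h⟩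
  · obtain ⟨hqM, hlt⟩ := mem_filter.1 hq
    obtain ⟨hqsum, hqsupp⟩ := mem_monomials.1 hqM
    obtain ⟨t, ht, hlast⟩ := exists_supportedBelow_succ (w := q) (by rintro rfl; simp at hqsum)
    have hq' : q - Pi.single t 1 ∈ monomials k d := sub_single_mem_monomials hqM ht
    have hmem : q - Pi.single t 1 ∈ lexInit m k d c := by
      rcases (toLex_le_sub_single (mem_monomials.1 hpM).1 hqsum ht hlast hlt).lt_or_eq with h | h
      · exact mem_lexInit_of_lt hp hq' h
      · rwa [← toLex.injective h]
    rw [← sub_single_add_single ht]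
    exact add_single_mem_shadow hmem (hqsupp t ht)
  · exact lt_irrefl _ (mem_filter.1 (hsub (add_single_mem_shadow hp hj))).2

end Macaulay

section Comparison

variable {m k d : ℕ} {A : Finset (Fin m → ℕ)}

theorem filter_supportedBelow_subset_monomials {k' : ℕ} (hA : A ⊆ monomials k' d) (k : ℕ) :
    A.filter (SupportedBelow k) ⊆ monomials k d := fun _ hu =>
  mem_monomials.2 ⟨(mem_monomials.1 (hA (mem_filter.1 hu).1)).1, (mem_filter.1 hu).2⟩

theorem filter_filter_supportedBelow {j : ℕ} (h : j ≤ k) :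
    (A.filter (SupportedBelow k)).filter (SupportedBelow j) = A.filter (SupportedBelow j) := by
  rw [filter_filter]
  exact filter_congr fun u _ => ⟨And.right, fun hu => ⟨fun i hi => (hu i hi).trans_le h, hu⟩⟩

theorem card_filter_supportedBelow_add_card_colon (hk : k < m) (hA : A ⊆ monomials (k + 1) d) :
    #(A.filter (SupportedBelow k)) + #(colon A ⟨k, hk⟩) = #A := by
  have hfilter : A.filter (SupportedBelow k) = A.filter fun u => u ⟨k, hk⟩ = 0 := by
    refine filter_congr fun u hu => ⟨fun h => h.apply_eq_zero le_rfl, fun h i hi => ?_⟩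
    have := (mem_monomials.1 (hA hu)).2 i hi
    refine lt_of_le_of_ne (Nat.lt_succ_iff.1 this) fun hik => hi ?_
    rwa [show i = ⟨k, hk⟩ from Fin.ext hik]
  rw [card_colon, hfilter, card_filter_add_card_filter_not]

theorem filter_lexInit_eq_lexInit (c : ℕ) :
    (lexInit m (k + 1) d c).filter (SupportedBelow k)
      = lexInit m k d #((lexInit m (k + 1) d c).filter (SupportedBelow k)) := by
  refine eq_lexInit_of_upward (filter_supportedBelow_subset_monomials lexInit_subset_monomials k)
    fun u hu v hv huv => mem_filter.2 ⟨?_, (mem_monomials.1 hv).2⟩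
  exact mem_lexInit_of_lt (mem_filter.1 hu).1 (monomials_mono k.le_succ hv) huv

/-- The shadow bound puts `x_k` times the segment of size `#(A : x_k)` inside the segment of size
`#A`, so the latter has at least as many multiples of `x_k` as `A`. -/
theorem card_filter_lexInit_le_of_card_shadow_le (hk : k < m) (hA : A ⊆ monomials (k + 1) (d + 1))
    (hsh : #(shadow (k + 1) (lexInit m (k + 1) d #(colon A ⟨k, hk⟩))) ≤ #A) :
    #((lexInit m (k + 1) (d + 1) #A).filter (SupportedBelow k))
      ≤ #(A.filter (SupportedBelow k)) := by
  have hL : lexInit m (k + 1) (d + 1) #A ⊆ monomials (k + 1) (d + 1) := lexInit_subset_monomials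
  have hcolon :
      lexInit m (k + 1) d #(colon A ⟨k, hk⟩) ⊆ colon (lexInit m (k + 1) (d + 1) #A) ⟨k, hk⟩ :=
    fun w hw => mem_colon.2 (add_single_mem_lexInit hw (Nat.lt_succ_self k) hsh)
  have h₁ := card_le_card hcolon
  rw [card_lexInit_of_subset (colon_subset_monomials hA)] at h₁
  have h₂ := card_filter_supportedBelow_add_card_colon hk hA
  have h₃ := card_filter_supportedBelow_add_card_colon hk hL
  have h₄ := card_lexInit_of_subset hA
  omega

/-- Induction on `k` and `d`: split `A` into its members prime to `x_k` and `x_k (A : x_k)`. -/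
theorem card_filter_lexInit_le (hk : k ≤ m) (hA : A ⊆ monomials k d) (hst : IsStronglyStable A)
    (j : ℕ) :
    #((lexInit m k d #A).filter (SupportedBelow j)) ≤ #(A.filter (SupportedBelow j)) := by
  induction k generalizing d A j with
  | zero =>
    rcases d with _ | d
    · rw [lexInit_card_eq_self_of_subsingleton hA monomials_zero_subsingleton]
    · rw [monomials_zero_succ, subset_empty] at hA
      rw [hA, card_empty, lexInit, topSeg_zero]
  | succ k ih =>
    induction d generalizing A j with
    | zero => rw [lexInit_card_eq_self_of_subsingleton hA monomials_zero_subsingleton]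
    | succ d ihd =>
      have hcolon := colon_subset_monomials (t := ⟨k, hk⟩) hA
      have hsh : #(shadow (k + 1) (lexInit m (k + 1) d #(colon A ⟨k, hk⟩))) ≤ #A :=
        (card_shadow_le_card_shadow lexInit_subset_monomials isStronglyStable_lexInit hcolon
          (hst.colon _) (ihd hcolon (hst.colon _))).trans
          (card_le_card (shadow_colon_subset hk hst))
      rcases le_or_gt (k + 1) j with hj | hj
      · have hall : ∀ B ⊆ monomials (m := m) (k + 1) (d + 1), B.filter (SupportedBelow j) = B :=
          fun B hB => filter_true_of_mem fun u hu i hi =>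
            ((mem_monomials.1 (hB hu)).2 i hi).trans_le hj
        rw [hall _ lexInit_subset_monomials, hall _ hA, card_lexInit_of_subset hA]
      · rw [← filter_filter_supportedBelow (Nat.lt_succ_iff.1 hj),
          ← filter_filter_supportedBelow (A := A) (Nat.lt_succ_iff.1 hj),
          filter_lexInit_eq_lexInit]
        refine le_trans (card_le_card (monotone_filter_left _ (lexInit_mono
          (card_filter_lexInit_le_of_card_shadow_le hk hA hsh)))) ?_
        exact ih (Nat.le_of_succ_le hk) (filter_supportedBelow_subset_monomials hA k)
          (hst.filter_supportedBelow k) j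

theorem card_shadow_lexInit_le (hk : k ≤ m) (hA : A ⊆ monomials k d) (hst : IsStronglyStable A) :
    #(shadow k (lexInit m k d #A)) ≤ #(shadow k A) :=
  card_shadow_le_card_shadow lexInit_subset_monomials isStronglyStable_lexInit hA hst
    (card_filter_lexInit_le hk hA hst)

/-- Macaulay's theorem, for strongly stable sets. -/
theorem add_single_mem_lexInit_of_shadow_subset (hk : k ≤ m) (hA : A ⊆ monomials k d)
    (hst : IsStronglyStable A) {B : Finset (Fin m → ℕ)} (hAB : shadow k A ⊆ B)
    {p : Fin m → ℕ} (hp : p ∈ lexInit m k d #A) {j : Fin m} (hj : (j : ℕ) < k) :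
    p + Pi.single j 1 ∈ lexInit m k (d + 1) #B :=
  add_single_mem_lexInit hp hj ((card_shadow_lexInit_le hk hA hst).trans (card_le_card hAB))

end Comparison

section Blocks

variable {s : ℕ} {n : Fin s → ℕ} {i : Fin s}

def blockExp (i : Fin s) (u : PPVar s n →₀ ℕ) : Fin (n i + 1) → ℕ := fun j => u ⟨i, j⟩

noncomputable def ofBlockExp (i : Fin s) (f : Fin (n i + 1) → ℕ) : PPVar s n →₀ ℕ :=
  Finsupp.mapDomain (Sigma.mk i) (Finsupp.equivFunOnFinite.symm f)

@[simp]
theorem blockExp_apply (u : PPVar s n →₀ ℕ) (j : Fin (n i + 1)) : blockExp i u j = u ⟨i, j⟩ :=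
  rfl

@[simp]
theorem ofBlockExp_apply_same (f : Fin (n i + 1) → ℕ) (j : Fin (n i + 1)) :
    ofBlockExp (n := n) i f ⟨i, j⟩ = f j := by
  rw [ofBlockExp, Finsupp.mapDomain_apply sigma_mk_injective]
  rfl

theorem ofBlockExp_apply_of_ne {i' : Fin s} (h : i' ≠ i) (f : Fin (n i + 1) → ℕ)
    (j : Fin (n i' + 1)) : ofBlockExp (n := n) i f ⟨i', j⟩ = 0 :=
  Finsupp.mapDomain_of_notMem_range _ _ fun ⟨_, hj⟩ => h (congrArg Sigma.fst hj).symm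

@[simp]
theorem offBlock_apply_same (u : PPVar s n →₀ ℕ) (j : Fin (n i + 1)) :
    offBlock i u ⟨i, j⟩ = 0 := by
  simp [offBlock]

theorem offBlock_apply_of_ne {i' : Fin s} (h : i' ≠ i) (u : PPVar s n →₀ ℕ)
    (j : Fin (n i' + 1)) : offBlock i u ⟨i', j⟩ = u ⟨i', j⟩ := by
  simp [offBlock, h]

@[simp]
theorem blockExp_ofBlockExp (f : Fin (n i + 1) → ℕ) : blockExp i (ofBlockExp (n := n) i f) = f :=
  funext (ofBlockExp_apply_same f)

theorem ofBlockExp_injective : Function.Injective (ofBlockExp (n := n) i) :=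
  Function.LeftInverse.injective blockExp_ofBlockExp

theorem blockPart_eq_ofBlockExp_blockExp (u : PPVar s n →₀ ℕ) :
    blockPart i u = ofBlockExp i (blockExp i u) := by
  ext ⟨i', j⟩
  rcases eq_or_ne i' i with rfl | h
  · simp [blockPart]
  · simp [blockPart, h, ofBlockExp_apply_of_ne h]

theorem blockExp_offBlock (u : PPVar s n →₀ ℕ) : blockExp i (offBlock i u) = 0 :=
  funext (offBlock_apply_same u)

theorem offBlock_add_ofBlockExp (q : PPVar s n →₀ ℕ) (f : Fin (n i + 1) → ℕ) :
    offBlock i (q + ofBlockExp i f) = offBlock i q := by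
  ext ⟨i', j⟩
  rcases eq_or_ne i' i with rfl | h
  · simp
  · simp [offBlock_apply_of_ne h, ofBlockExp_apply_of_ne h]

theorem offBlock_offBlock (u : PPVar s n →₀ ℕ) : offBlock i (offBlock i u) = offBlock i u := by
  ext ⟨i', j⟩
  rcases eq_or_ne i' i with rfl | h
  · simp
  · simp [offBlock_apply_of_ne h]

theorem sum_ofBlockExp (f : Fin (n i + 1) → ℕ) :
    (ofBlockExp (n := n) i f).sum (fun _ e => e) = ∑ j, f j := by
  rw [ofBlockExp, Finsupp.sum_mapDomain_index (fun _ => rfl) (fun _ _ _ => rfl),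
    Finsupp.sum_fintype _ _ fun _ => rfl]
  rfl

theorem blockMon_eq_image (i : Fin s) (d : ℕ) :
    blockMon (n := n) i d = ofBlockExp i '' ↑(monomials (m := n i + 1) (n i + 1) d) := by
  ext p
  constructor
  · rintro ⟨hsupp, hsum⟩
    have hp : ofBlockExp i (blockExp i p) = p := by
      rw [← blockPart_eq_ofBlockExp_blockExp]
      exact (Finsupp.filter_eq_self_iff _ _).2 fun v hv => hsupp v (Finsupp.mem_support_iff.2 hv)
    refine ⟨blockExp i p, mem_monomials.2 ⟨?_, supportedBelow_of_le le_rfl _⟩, hp⟩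
    rw [← hsum, ← hp, sum_ofBlockExp, blockExp_ofBlockExp]
  · rintro ⟨f, hf, rfl⟩
    refine ⟨fun ⟨i', j⟩ hv => by_contra fun h => ?_, by rw [sum_ofBlockExp, (mem_monomials.1 hf).1]⟩
    exact Finsupp.mem_support_iff.1 hv (ofBlockExp_apply_of_ne h f j)

theorem ncard_blockMon_filter (d : ℕ) (P : (Fin (n i + 1) → ℕ) → Prop) [DecidablePred P] :
    {p | p ∈ blockMon i d ∧ P (blockExp i p)}.ncard = #((monomials (n i + 1) d).filter P) := by
  have himage : {p | p ∈ blockMon i d ∧ P (blockExp i p)}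
      = ofBlockExp i '' ↑((monomials (n i + 1) d).filter P) := by
    ext p
    simp only [blockMon_eq_image, Set.mem_image, coe_filter, mem_coe]
    grind [blockExp_ofBlockExp]
  rw [himage, Set.ncard_image_of_injective _ ofBlockExp_injective, Set.ncard_coe_finset]

theorem blockPart_mem_lexSeg_iff {u : PPVar s n →₀ ℕ} {d c : ℕ} :
    blockPart i u ∈ lexSeg i d c ↔ blockExp i u ∈ lexInit (n i + 1) (n i + 1) d c := by
  rw [lexSeg, Set.mem_sep_iff, lexInit, mem_topSeg, blockPart_eq_ofBlockExp_blockExp]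
  refine and_congr (by rw [blockMon_eq_image, ofBlockExp_injective.mem_set_image, mem_coe]) ?_
  have hlt : ∀ p,
      blockLt i (ofBlockExp i (blockExp i u)) p ↔ toLex (blockExp i u) < toLex (blockExp i p) := by
    intro p
    change toLex (blockExp i (ofBlockExp i (blockExp i u))) < _ ↔ _
    rw [blockExp_ofBlockExp]
    exact Iff.rfl
  simp only [Set.inter_def, Set.mem_ofPred_eq, hlt]
  rw [numAbove, ← ncard_blockMon_filter]
  rfl

end Blocks

section BlockArithmetic

variable {s : ℕ} {n : Fin s → ℕ} {i : Fin s}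

theorem blockExp_add (u v : PPVar s n →₀ ℕ) : blockExp i (u + v) = blockExp i u + blockExp i v :=
  rfl

theorem blockExp_tsub (u v : PPVar s n →₀ ℕ) : blockExp i (u - v) = blockExp i u - blockExp i v :=
  rfl

theorem blockExp_single_same (j : Fin (n i + 1)) (c : ℕ) :
    blockExp i (Finsupp.single (⟨i, j⟩ : PPVar s n) c) = Pi.single j c := by
  funext j'
  simp [Finsupp.single_apply, Pi.single_apply, eq_comm]

theorem blockExp_single_of_ne {i' : Fin s} (h : i' ≠ i) (j : Fin (n i' + 1)) (c : ℕ) :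
    blockExp i (Finsupp.single (⟨i', j⟩ : PPVar s n) c) = 0 := by
  funext j'
  simp [h]

theorem offBlock_add (u v : PPVar s n →₀ ℕ) :
    offBlock i (u + v) = offBlock i u + offBlock i v :=
  Finsupp.filter_add

theorem offBlock_tsub (u v : PPVar s n →₀ ℕ) :
    offBlock i (u - v) = offBlock i u - offBlock i v := by
  ext ⟨i', j⟩
  rcases eq_or_ne i' i with rfl | h
  · simp
  · simp [offBlock_apply_of_ne h]

theorem offBlock_single_same (j : Fin (n i + 1)) (c : ℕ) :
    offBlock i (Finsupp.single (⟨i, j⟩ : PPVar s n) c) = 0 :=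
  Finsupp.filter_single_of_neg _ fun h => h rfl

theorem offBlock_single_of_ne {i' : Fin s} (h : i' ≠ i) (j : Fin (n i' + 1)) (c : ℕ) :
    offBlock i (Finsupp.single (⟨i', j⟩ : PPVar s n) c) = Finsupp.single ⟨i', j⟩ c :=
  Finsupp.filter_single_of_pos _ h

theorem ofBlockExp_add_single (f : Fin (n i + 1) → ℕ) (j : Fin (n i + 1)) :
    ofBlockExp i (f + Pi.single j 1) = ofBlockExp i f + Finsupp.single (⟨i, j⟩ : PPVar s n) 1 := by
  ext ⟨i', j'⟩
  rcases eq_or_ne i' i with rfl | h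
  · simp [Finsupp.single_apply, Pi.single_apply, eq_comm]
  · simp [ofBlockExp_apply_of_ne h, h.symm]

theorem ofBlockExp_move (f : Fin (n i + 1) → ℕ) (j j' : Fin (n i + 1)) :
    ofBlockExp i (f - Pi.single j 1 + Pi.single j' 1)
      = ofBlockExp i f - Finsupp.single (⟨i, j⟩ : PPVar s n) 1 + Finsupp.single ⟨i, j'⟩ 1 := by
  ext ⟨i', j''⟩
  rcases eq_or_ne i' i with rfl | h
  · simp [Finsupp.single_apply, Pi.single_apply, eq_comm]
  · simp [ofBlockExp_apply_of_ne h, h.symm]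

end BlockArithmetic

section Fibres

variable {s : ℕ} {n : Fin s → ℕ} {i : Fin s} {M M' : Set (PPVar s n →₀ ℕ)}
  {q : PPVar s n →₀ ℕ} {d : ℕ}

open Classical in
/-- The paper's `M_j`, for the off-block part `x^{u_j} = x^q`. -/
noncomputable def fibre (i : Fin s) (M : Set (PPVar s n →₀ ℕ)) (q : PPVar s n →₀ ℕ) (d : ℕ) :
    Finset (Fin (n i + 1) → ℕ) :=
  (monomials (n i + 1) d).filter fun f => q + ofBlockExp i f ∈ M

theorem mem_fibre {f : Fin (n i + 1) → ℕ} :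
    f ∈ fibre i M q d ↔ f ∈ monomials (n i + 1) d ∧ q + ofBlockExp i f ∈ M := by
  classical
  exact mem_filter

theorem fibre_subset_monomials : fibre i M q d ⊆ monomials (n i + 1) d :=
  fun _ hf => (mem_fibre.1 hf).1

theorem ncard_eq_card_fibre (q : PPVar s n →₀ ℕ) (d : ℕ) :
    {p | p ∈ blockMon i d ∧ q + p ∈ M}.ncard = #(fibre i M q d) := by
  classical
  have hset : {p | p ∈ blockMon i d ∧ q + p ∈ M}
      = {p | p ∈ blockMon i d ∧ q + ofBlockExp i (blockExp i p) ∈ M} := by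
    ext p
    refine and_congr_right fun hp => ?_
    rw [blockMon_eq_image] at hp
    obtain ⟨f, -, rfl⟩ := hp
    rw [blockExp_ofBlockExp]
  rw [hset, ncard_blockMon_filter d fun f => q + ofBlockExp i f ∈ M]
  rfl

theorem mem_xiLexify_iff {w : PPVar s n →₀ ℕ} :
    w ∈ xiLexify i M ↔
      ∃ d, blockExp i w ∈ lexInit (n i + 1) (n i + 1) d #(fibre i M (offBlock i w) d) := by
  constructor
  · rintro ⟨u, -, hoff, hseg⟩
    rw [blockPart_mem_lexSeg_iff, ncard_eq_card_fibre, ← hoff] at hseg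
    exact ⟨_, hseg⟩
  · rintro ⟨d, hd⟩
    obtain ⟨f, hf⟩ : (fibre i M (offBlock i w) d).Nonempty := by
      rw [nonempty_iff_ne_empty]
      intro h
      rw [h, card_empty, lexInit, topSeg_zero] at hd
      exact notMem_empty _ hd
    obtain ⟨hfM, hfmem⟩ := mem_fibre.1 hf
    have hoff : offBlock i (offBlock i w + ofBlockExp i f) = offBlock i w := by
      rw [offBlock_add_ofBlockExp, offBlock_offBlock]
    have hdeg : (blockPart i (offBlock i w + ofBlockExp i f)).sum (fun _ e => e) = d := by
      rw [blockPart_eq_ofBlockExp_blockExp, blockExp_add, blockExp_offBlock, zero_add,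
        blockExp_ofBlockExp, sum_ofBlockExp, (mem_monomials.1 hfM).1]
    refine ⟨_, hfmem, hoff.symm, ?_⟩
    rw [hdeg, blockPart_mem_lexSeg_iff, ncard_eq_card_fibre, hoff]
    exact hd

theorem isStronglyStable_fibre (hM : StronglyMultistableSet M) :
    IsStronglyStable (fibre i M q d) := by
  intro f hf j j' hjj hj
  obtain ⟨hfM, hfmem⟩ := mem_fibre.1 hf
  refine mem_fibre.2 ⟨move_mem_monomials hfM hj j'.2, ?_⟩
  have hcoord : (q + ofBlockExp i f) ⟨i, j⟩ ≠ 0 := by simp [hj]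
  have hle : Finsupp.single (⟨i, j⟩ : PPVar s n) 1 ≤ ofBlockExp i f :=
    Finsupp.single_le_iff.2 (Nat.one_le_iff_ne_zero.2 (by simpa using hj))
  rw [ofBlockExp_move, ← add_assoc, ← add_tsub_assoc_of_le hle]
  exact hM _ hfmem i j j' hjj hcoord

theorem shadow_fibre_subset (hMM' : ∀ u ∈ M, ∀ j, u + Finsupp.single ⟨i, j⟩ 1 ∈ M') :
    shadow (n i + 1) (fibre i M q d) ⊆ fibre i M' q (d + 1) := by
  intro g hg
  obtain ⟨f, hf, j, -, rfl⟩ := mem_shadow.1 hg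
  obtain ⟨hfM, hfmem⟩ := mem_fibre.1 hf
  refine mem_fibre.2 ⟨add_single_mem_monomials hfM j.2, ?_⟩
  rw [ofBlockExp_add_single, ← add_assoc]
  exact hMM' _ hfmem j

theorem fibre_subset_fibre_add_single {v : PPVar s n}
    (hMM' : ∀ u ∈ M, u + Finsupp.single v 1 ∈ M') :
    fibre i M q d ⊆ fibre i M' (q + Finsupp.single v 1) d := by
  intro f hf
  obtain ⟨hfM, hfmem⟩ := mem_fibre.1 hf
  refine mem_fibre.2 ⟨hfM, ?_⟩
  rw [add_right_comm]
  exact hMM' _ hfmem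

theorem fibre_subset_fibre_move (hM : StronglyMultistableSet M) {i' : Fin s}
    {j j' : Fin (n i' + 1)} (hjj : j' < j) (hq : q ⟨i', j⟩ ≠ 0) :
    fibre i M q d ⊆ fibre i M (q - Finsupp.single ⟨i', j⟩ 1 + Finsupp.single ⟨i', j'⟩ 1) d := by
  intro f hf
  obtain ⟨hfM, hfmem⟩ := mem_fibre.1 hf
  refine mem_fibre.2 ⟨hfM, ?_⟩
  have hle : Finsupp.single (⟨i', j⟩ : PPVar s n) 1 ≤ q :=
    Finsupp.single_le_iff.2 (Nat.one_le_iff_ne_zero.2 hq)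
  rw [add_right_comm, tsub_add_eq_add_tsub hle]
  exact hM _ hfmem i' j j' hjj (by simp [hq])

end Fibres

section Families

variable {s : ℕ} {n : Fin s → ℕ}

theorem StronglyMultistableSet.xiLexify {M : Set (PPVar s n →₀ ℕ)}
    (hM : StronglyMultistableSet M) (i : Fin s) : StronglyMultistableSet (xiLexify i M) := by
  intro w hw i' j j' hjj hj
  obtain ⟨d, hd⟩ := mem_xiLexify_iff.1 hw
  refine mem_xiLexify_iff.2 ⟨d, ?_⟩
  rcases eq_or_ne i' i with rfl | hi
  · rw [offBlock_add, offBlock_tsub, offBlock_single_same, offBlock_single_same, tsub_zero,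
      add_zero, blockExp_add, blockExp_tsub, blockExp_single_same, blockExp_single_same]
    exact isStronglyStable_lexInit _ hd j j' hjj hj
  · rw [blockExp_add, blockExp_tsub, blockExp_single_of_ne hi, blockExp_single_of_ne hi,
      tsub_zero, add_zero, offBlock_add, offBlock_tsub, offBlock_single_of_ne hi,
      offBlock_single_of_ne hi]
    refine lexInit_mono (card_le_card (fibre_subset_fibre_move hM hjj ?_)) hd
    rwa [offBlock_apply_of_ne hi]

/-- What the argument uses of the graded pieces `F b` of a strongly multistable ideal. -/
structure IsStableFamily (F : (Fin s → ℕ) → Set (PPVar s n →₀ ℕ)) : Prop where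
  stable : ∀ b, StronglyMultistableSet (F b)
  add_single_mem :
    ∀ b, ∀ u ∈ F b, ∀ v : PPVar s n, u + Finsupp.single v 1 ∈ F (b + Pi.single v.1 1)

variable {F : (Fin s → ℕ) → Set (PPVar s n →₀ ℕ)}

theorem IsStableFamily.xiLexify (hF : IsStableFamily F) (i : Fin s) :
    IsStableFamily fun b => xiLexify i (F b) where
  stable b := (hF.stable b).xiLexify i
  add_single_mem b w hw := by
    rintro ⟨i', j⟩
    obtain ⟨d, hd⟩ := mem_xiLexify_iff.1 hw
    rcases eq_or_ne i' i with rfl | hi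
    · refine mem_xiLexify_iff.2 ⟨d + 1, ?_⟩
      rw [offBlock_add, offBlock_single_same, add_zero, blockExp_add, blockExp_single_same]
      exact add_single_mem_lexInit_of_shadow_subset le_rfl fibre_subset_monomials
        (isStronglyStable_fibre (hF.stable b))
        (shadow_fibre_subset fun u hu j => hF.add_single_mem b u hu ⟨i', j⟩) hd j.2
    · refine mem_xiLexify_iff.2 ⟨d, ?_⟩
      rw [blockExp_add, blockExp_single_of_ne hi, add_zero, offBlock_add, offBlock_single_of_ne hi]
      exact lexInit_mono (card_le_card (fibre_subset_fibre_add_single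
        fun u hu => hF.add_single_mem b u hu _)) hd

theorem IsStableFamily.lexifyUpTo (hF : IsStableFamily F) (t : ℕ) :
    IsStableFamily fun b => lexifyUpTo (F b) t := by
  induction t with
  | zero => exact hF
  | succ t ih =>
    change IsStableFamily fun b =>
      if h : t < s then Gotzmann.xiLexify ⟨t, h⟩ (Gotzmann.lexifyUpTo (F b) t)
      else Gotzmann.lexifyUpTo (F b) t
    by_cases ht : t < s
    · simpa only [dif_pos ht] using ih.xiLexify ⟨t, ht⟩
    · simpa only [dif_neg ht] using ih

theorem wdeg_eq_weight {σ M : Type*} [AddCommMonoid M] (w : σ → M) :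
    wdeg w = Finsupp.weight w :=
  rfl

theorem wdeg_move {σ M : Type*} [AddCancelCommMonoid M] (w : σ → M) {u : σ →₀ ℕ} {x y : σ}
    (hx : u x ≠ 0) (hxy : w x = w y) :
    wdeg w (u - Finsupp.single x 1 + Finsupp.single y 1) = wdeg w u := by
  have hle : Finsupp.single x 1 ≤ u := Finsupp.single_le_iff.2 (Nat.one_le_iff_ne_zero.2 hx)
  have h := congrArg (Finsupp.weight w) (add_right_comm (u - Finsupp.single x 1)
    (Finsupp.single y 1) (Finsupp.single x 1))
  rw [tsub_add_cancel_of_le hle, map_add _ (u - Finsupp.single x 1 + Finsupp.single y 1),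
    map_add _ u, Finsupp.weight_single, Finsupp.weight_single, one_smul, one_smul, hxy] at h
  exact add_right_cancel h

theorem isStableFamily_monomialsOf {k : Type*} [Field k] {I : Ideal (MvPolynomial (PPVar s n) k)}
    (hI : StronglyMultistable I) : IsStableFamily (monomialsOf I) where
  stable b u hu i j j' hjj hj := by
    refine ⟨?_, hI.2 u hu.2 i j j' hjj hj⟩
    rw [wdeg_move _ hj (by simp only [ppw]), hu.1]
  add_single_mem b u hu v := by
    refine ⟨?_, ?_⟩
    · rw [wdeg_eq_weight, map_add, Finsupp.weight_single, one_smul, ← wdeg_eq_weight, hu.1, ppw]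
    · rw [← one_mul (1 : k), ← monomial_mul]
      exact I.mul_mem_right _ hu.2

end Families

theorem add_mem_of_forall_add_single_mem {σ : Type*} {S : Set (σ →₀ ℕ)}
    (hS : ∀ u ∈ S, ∀ v, u + Finsupp.single v 1 ∈ S) : ∀ u ∈ S, ∀ w, u + w ∈ S := by
  have hsingle : ∀ u ∈ S, ∀ v c, u + Finsupp.single v c ∈ S := by
    intro u hu v c
    induction c with
    | zero => simpa using hu
    | succ c ih => simpa [Finsupp.single_add, add_assoc] using hS _ ih v
  intro u hu w
  induction w using Finsupp.induction generalizing u with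
  | zero => simpa using hu
  | single_add v c w _ _ ih => simpa [add_assoc] using ih _ (hsingle u hu v c)

theorem mul_mem_span_monomial_image {R σ : Type*} [CommSemiring R] {S : Set (σ →₀ ℕ)}
    (hS : ∀ u ∈ S, ∀ w, u + w ∈ S) (g : MvPolynomial σ R) {f : MvPolynomial σ R}
    (hf : f ∈ Submodule.span R ((fun u => monomial u (1 : R)) '' S)) :
    g * f ∈ Submodule.span R ((fun u => monomial u (1 : R)) '' S) := by
  classical
  rw [← restrictSupport_eq_span, mem_restrictSupport_iff] at hf ⊢
  intro m hm
  obtain ⟨a, -, b, hb, rfl⟩ := Finset.mem_add.1 (support_mul g f hm)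
  rw [add_comm]
  exact hS b (hf hb) a

/-- **Lemma: `I^{multilex}` is an ideal.** For a strongly multistable ideal `I`, the `k`-span of
the monomials obtained by multilexifying each graded piece of `I` is closed under multiplication
by arbitrary polynomials, i.e. it is an ideal. -/
theorem multilexify_is_ideal {k : Type*} [Field k] {s : ℕ} {n : Fin s → ℕ}
    (I : Ideal (MvPolynomial (PPVar s n) k)) (hI : StronglyMultistable I) :
    ∀ g f : MvPolynomial (PPVar s n) k,
      f ∈ Submodule.span k ((fun u => (monomial u (1 : k))) ''
          ⋃ a : Fin s → ℕ, multilexify (monomialsOf I a)) →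
      g * f ∈ Submodule.span k ((fun u => (monomial u (1 : k))) ''
          ⋃ a : Fin s → ℕ, multilexify (monomialsOf I a)) := by
  intro g f hf
  have hfamily := (isStableFamily_monomialsOf hI).lexifyUpTo s
  refine mul_mem_span_monomial_image (add_mem_of_forall_add_single_mem ?_) g hf
  intro u hu v
  obtain ⟨a, ha⟩ := Set.mem_iUnion.1 hu
  exact Set.mem_iUnion.2 ⟨_, hfamily.add_single_mem a u ha v⟩

end Gotzmann
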